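/- If p ≡ 1 (mod 4) is prime, then either ∑_{a=1}^{(p-1)/2 - 1} (a/p) < 0 or ∑_{a=1}^{(p-1)/2 + 1} (a/p) < 0. -/

import Mathlib

/-!
Since `p ≡ 1 (mod 4)`, `-1` is a square mod `p`, so `a` and `p - a` have the same Legendre symbol.
The symbols sum to zero over `1, …, p - 1`, hence over each of the two mirror-image halves, so with
`m = (p - 1) / 2` the partial sum up to `m` vanishes. As `m + 1 = p - m`, the symbols at `m` and
`m + 1` agree, with common value `ε = ±1`; the partial sums up to `m - 1` and `m + 1` are then
`-ε` and `ε`, and one of them is `-1`.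
-/

open Finset

theorem Finset.sum_Icc_two_mul_eq_two_nsmul_of_reflect {M : Type*} [AddCommMonoid M]
    (f : ℕ → M) (m : ℕ) (hf : ∀ a ∈ Icc 1 m, f (2 * m + 1 - a) = f a) :
    ∑ a ∈ Icc 1 (2 * m), f a = 2 • ∑ a ∈ Icc 1 m, f a := by
  have hsplit : Icc 1 (2 * m) = Icc 1 m ∪ Icc (m + 1) (2 * m) := by
    ext a; simp only [mem_Icc, mem_union]; omega
  have hdisj : Disjoint (Icc 1 m) (Icc (m + 1) (2 * m)) := by
    simp only [disjoint_left, mem_Icc]; omega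
  have hreflect : ∑ a ∈ Icc (m + 1) (2 * m), f a = ∑ a ∈ Icc 1 m, f a := by
    refine sum_nbij' (fun a ↦ 2 * m + 1 - a) (fun a ↦ 2 * m + 1 - a) ?_ ?_ ?_ ?_ ?_ <;>
      intro a ha <;> simp only [mem_Icc] at ha ⊢
    any_goals omega
    rw [← hf (2 * m + 1 - a) (mem_Icc.mpr (by omega)), Nat.sub_sub_self (by omega)]
  rw [hsplit, sum_union hdisj, hreflect, two_nsmul]

theorem ZMod.sum_range_natCast {M : Type*} [AddCommMonoid M] (n : ℕ) [NeZero n]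
    (f : ZMod n → M) : ∑ a ∈ range n, f a = ∑ x : ZMod n, f x :=
  sum_nbij' (fun a ↦ (a : ZMod n)) ZMod.val (fun _ _ ↦ mem_coe.mpr (mem_univ _))
    (fun x _ ↦ mem_coe.mpr (mem_range.mpr (ZMod.val_lt x)))
    (fun _ ha ↦ ZMod.val_natCast_of_lt (mem_range.mp ha)) (fun x _ ↦ ZMod.natCast_zmod_val x)
    (fun _ _ ↦ rfl)

namespace legendreSym

variable (p : ℕ) [Fact p.Prime]

theorem sum_Icc_eq_zero (hp : p ≠ 2) : ∑ a ∈ Icc 1 (p - 1), legendreSym p a = 0 := by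
  have hrange : ∑ a ∈ range p, legendreSym p a = 0 := by
    simpa only [legendreSym, Int.cast_natCast] using
      (ZMod.sum_range_natCast p (quadraticChar (ZMod p))).trans
        (quadraticChar_sum_zero (by rwa [ZMod.ringChar_zmod_n]))
  have hIco : Ico 1 p = Icc 1 (p - 1) := by ext a; simp only [mem_Ico, mem_Icc]; omega
  rwa [range_eq_Ico, sum_eq_sum_Ico_succ_bot (Fact.out : p.Prime).pos, Nat.cast_zero, at_zero,
    zero_add, hIco] at hrange

theorem neg_of_mod_four_eq_one (hp : p % 4 = 1) (a : ℤ) :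
    legendreSym p (-a) = legendreSym p a := by
  rw [at_neg (by omega : p ≠ 2), ZMod.χ₄_nat_one_mod_four hp, one_mul]

theorem natCast_sub_of_mod_four_eq_one (hp : p % 4 = 1) {a : ℕ} (ha : a ≤ p) :
    legendreSym p ((p - a : ℕ) : ℤ) = legendreSym p a := by
  rw [← neg_of_mod_four_eq_one p hp (a : ℤ)]
  simp only [legendreSym]
  push_cast [ha]
  rw [ZMod.natCast_self, zero_sub]

theorem sum_Icc_half_eq_zero (hp : p % 4 = 1) :
    ∑ a ∈ Icc 1 ((p - 1) / 2), legendreSym p a = 0 := by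
  have hhalf : p - 1 = 2 * ((p - 1) / 2) := by omega
  have hsum := sum_Icc_eq_zero p (by omega)
  rw [hhalf, sum_Icc_two_mul_eq_two_nsmul_of_reflect] at hsum
  · simpa using hsum
  · intro a ha
    rw [← hhalf, Nat.sub_add_cancel (Fact.out : p.Prime).one_le,
      natCast_sub_of_mod_four_eq_one p hp (by simp only [mem_Icc] at ha; omega)]

theorem natCast_eq_one_or_neg_one {a : ℕ} (ha₀ : 0 < a) (hap : a < p) :
    legendreSym p a = 1 ∨ legendreSym p a = -1 := by
  refine eq_one_or_neg_one p ?_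
  rw [Int.cast_natCast, Ne, ZMod.natCast_eq_zero_iff]
  exact fun h ↦ (Nat.le_of_dvd ha₀ h).not_gt hap

end legendreSym

/-- If `p ≡ 1 (mod 4)` is prime, then either
`∑_{a=1}^{(p-1)/2 - 1} (a/p) < 0` or `∑_{a=1}^{(p-1)/2 + 1} (a/p) < 0`. -/
theorem stmt_17 (p : ℕ) [Fact p.Prime] (hp : p % 4 = 1) :
    (∑ a ∈ Finset.Icc 1 ((p - 1) / 2 - 1), legendreSym p a < 0) ∨
      (∑ a ∈ Finset.Icc 1 ((p - 1) / 2 + 1), legendreSym p a < 0) := by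
  have hp5 : 5 ≤ p := by have := (Fact.out : p.Prime).two_le; omega
  set m := (p - 1) / 2
  have hhalf : ∑ a ∈ Icc 1 m, legendreSym p a = 0 := legendreSym.sum_Icc_half_eq_zero p hp
  have hsucc : legendreSym p (m + 1 : ℕ) = legendreSym p m := by
    rw [show m + 1 = p - m by omega, legendreSym.natCast_sub_of_mod_four_eq_one p hp (by omega)]
  have hbelow : ∑ a ∈ Icc 1 (m - 1), legendreSym p a = -legendreSym p m := by
    have hsplit := sum_Icc_succ_top (show 1 ≤ m - 1 + 1 by omega) (fun a ↦ legendreSym p a)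
    rw [Nat.sub_add_cancel (show 1 ≤ m by omega)] at hsplit
    omega
  have habove : ∑ a ∈ Icc 1 (m + 1), legendreSym p a = legendreSym p m := by
    rw [sum_Icc_succ_top (by omega), hhalf, zero_add, hsucc]
  rcases legendreSym.natCast_eq_one_or_neg_one p (a := m) (by omega) (by omega) with h | h
  · left; omega
  · right; omega
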